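/- For every odd positive integer n, the number of permutations in S_n with all cycles of odd length equals n times the number of permutations in S_{n-1} with all cycles of even length. -/

import Mathlib

/-!
Removing the point `none` from its cycle identifies `Perm (Option α)` with pairs
`(σ none, removeNone σ)`: the cycle through `none` loses one point and all other cycles are
unchanged. Keeping track of the parity of the cycle through a marked point, this gives for the
numbers `a n`, `b n` of permutations of `Fin n` with all cycles odd, resp. all cycles even,
`a (n + 2) = a (n + 1) + (n + 1) n a n` and `b (n + 2) = (n + 1)² b n`, whence by induction
`a (2k) = b (2k)` and `a (2k + 1) = (2k + 1) b (2k)`.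
-/

open Equiv Finset

theorem Nat.card_subtype_option {α : Type*} [Finite α] (p : Option α → Prop)
    [Decidable (p none)] :
    Nat.card {z // p z} = Nat.card {a // p (some a)} + if p none then 1 else 0 := by
  have := Fintype.ofFinite α
  classical
  simp only [Nat.card_eq_fintype_card, Fintype.card_subtype, Finset.card_filter,
    Fintype.sum_option]
  split_ifs <;> simp [add_comm]

namespace Equiv.Perm

variable {α β : Type*}

/-- Unlike `#(f.cycleOf x).support`, this is `1` at a fixed point. -/
noncomputable def cycleLength (f : Perm α) (x : α) : ℕ := Nat.card {y // f.SameCycle x y}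

theorem SameCycle.cycleLength_eq {f : Perm α} {x y : α} (h : f.SameCycle x y) :
    f.cycleLength x = f.cycleLength y :=
  Nat.card_congr <| Equiv.subtypeEquivRight fun _ => ⟨h.symm.trans, h.trans⟩

theorem cycleLength_eq_one_of_apply_eq {f : Perm α} {x : α} (h : f x = x) :
    f.cycleLength x = 1 := by
  refine Nat.card_eq_one_iff_unique.2 ⟨⟨fun ⟨_, hy⟩ ⟨_, hz⟩ => ?_⟩, ⟨⟨x, SameCycle.refl f x⟩⟩⟩
  exact Subtype.ext ((hy.eq_of_left h).symm.trans (hz.eq_of_left h))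

theorem card_support_cycleOf_eq_cycleLength [Fintype α] [DecidableEq α] {f : Perm α} {x : α}
    (h : f x ≠ x) : #(f.cycleOf x).support = f.cycleLength x := by
  rw [cycleLength, ← Fintype.card_coe, ← Nat.card_eq_fintype_card]
  exact Nat.card_congr <| Equiv.subtypeEquivRight fun _ => mem_support_cycleOf_iff' h

theorem mem_cycleType_iff_exists_cycleLength [Fintype α] [DecidableEq α] {f : Perm α} {l : ℕ} :
    l ∈ f.cycleType ↔ ∃ x, f x ≠ x ∧ f.cycleLength x = l := by
  simp_rw [cycleType_def, Multiset.mem_map, ← Finset.mem_def]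
  constructor
  · rintro ⟨c, hc, rfl⟩
    obtain ⟨x, hx⟩ := (mem_cycleFactorsFinset_iff.1 hc).1.nonempty_support
    have hfx : f x ≠ x := mem_support.1 (mem_cycleFactorsFinset_support_le hc hx)
    refine ⟨x, hfx, ?_⟩
    rw [← card_support_cycleOf_eq_cycleLength hfx, ← cycle_is_cycleOf hx hc]
    rfl
  · rintro ⟨x, hx, rfl⟩
    exact ⟨f.cycleOf x, cycleOf_mem_cycleFactorsFinset_iff.2 (mem_support.2 hx),
      card_support_cycleOf_eq_cycleLength hx⟩

theorem forall_cycleLength_iff [Fintype α] [DecidableEq α] {f : Perm α} {P : ℕ → Prop} :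
    (∀ x, P (f.cycleLength x)) ↔ (∀ x, f x = x → P 1) ∧ ∀ l ∈ f.cycleType, P l := by
  simp_rw [mem_cycleType_iff_exists_cycleLength]
  constructor
  · intro h
    exact ⟨fun x hx => cycleLength_eq_one_of_apply_eq hx ▸ h x,
      fun _ ⟨x, _, hl⟩ => hl ▸ h x⟩
  · rintro ⟨hfix, hcyc⟩ x
    by_cases hx : f x = x
    · exact (cycleLength_eq_one_of_apply_eq hx).symm ▸ hfix x hx
    · exact hcyc _ ⟨x, hx, rfl⟩

theorem sameCycle_permCongr {e : α ≃ β} {f : Perm α} {x y : α} :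
    (e.permCongr f).SameCycle (e x) (e y) ↔ f.SameCycle x y := by
  have hpow (i : ℤ) : e.permCongr f ^ i = e.permCongr (f ^ i) :=
    (map_zpow e.permCongrHom f i).symm
  simp only [SameCycle, hpow, permCongr_apply, symm_apply_apply, e.apply_eq_iff_eq]

theorem cycleLength_permCongr (e : α ≃ β) (f : Perm α) (x : α) :
    (e.permCongr f).cycleLength (e x) = f.cycleLength x := by
  refine Nat.card_congr (e.symm.subtypeEquiv fun y => ?_)
  rw [← sameCycle_permCongr (e := e), apply_symm_apply]

theorem sameCycle_some_removeNone_apply (f : Perm (Option α)) (x : α) :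
    f.SameCycle (some x) (some (removeNone f x)) := by
  cases hx : f (some x) with
  | some w => exact ⟨1, by rw [zpow_one, hx, removeNone_some f ⟨w, hx⟩, hx]⟩
  | none => exact ⟨2, by rw [removeNone_none f hx, ← hx, zpow_two, mul_apply]⟩

theorem sameCycle_removeNone_of_pow_apply_eq {f : Perm (Option α)} {x y : α} {n : ℕ}
    (hn : (f ^ n) (some x) = some y) : SameCycle (removeNone f) x y := by
  induction n using Nat.strongRecOn generalizing x with
  | ind n ih =>
    cases n with
    | zero => exact Option.some_injective _ hn ▸ SameCycle.refl _ _
    | succ n =>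
      rw [pow_succ, mul_apply] at hn
      cases hx : f (some x) with
      | some w =>
        rw [← removeNone_some f ⟨w, hx⟩] at hn hx
        exact sameCycle_apply_left.1 (ih n n.lt_succ_self hn)
      | none =>
        cases n with
        | zero => simp [hx] at hn
        | succ n =>
          rw [hx, pow_succ, mul_apply, ← removeNone_none f hx] at hn
          exact sameCycle_apply_left.1 (ih n (by omega) hn)

theorem sameCycle_removeNone_iff [Finite α] {f : Perm (Option α)} {x y : α} :
    SameCycle (removeNone f) x y ↔ f.SameCycle (some x) (some y) := by
  constructor
  · intro h
    obtain ⟨n, rfl⟩ := h.exists_nat_pow_eq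
    clear h
    induction n generalizing x with
    | zero => exact SameCycle.refl _ _
    | succ n ih =>
      rw [pow_succ, mul_apply]
      exact (sameCycle_some_removeNone_apply f x).trans ih
  · intro h
    obtain ⟨n, hn⟩ := h.exists_nat_pow_eq
    exact sameCycle_removeNone_of_pow_apply_eq hn

theorem cycleLength_some_of_not_sameCycle [Finite α] {f : Perm (Option α)} {x : α}
    (h : ¬f.SameCycle (some x) none) :
    f.cycleLength (some x) = cycleLength (removeNone f) x := by
  classical
  rw [cycleLength, Nat.card_subtype_option, if_neg h, add_zero]
  exact Nat.card_congr (Equiv.subtypeEquivRight fun _ => sameCycle_removeNone_iff.symm)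

theorem cycleLength_some_of_sameCycle [Finite α] {f : Perm (Option α)} {x : α}
    (h : f.SameCycle (some x) none) :
    f.cycleLength (some x) = cycleLength (removeNone f) x + 1 := by
  classical
  rw [cycleLength, Nat.card_subtype_option, if_pos h]
  congr 1
  exact Nat.card_congr (Equiv.subtypeEquivRight fun _ => sameCycle_removeNone_iff.symm)

def MarkedCycleLengths (P Q : ℕ → Prop) (b : α) (f : Perm α) : Prop :=
  Q (f.cycleLength b) ∧ ∀ y, ¬f.SameCycle b y → P (f.cycleLength y)

theorem markedCycleLengths_self_iff {P : ℕ → Prop} {b : α} {f : Perm α} :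
    MarkedCycleLengths P P b f ↔ ∀ y, P (f.cycleLength y) := by
  refine ⟨fun ⟨hb, hP⟩ y => ?_, fun h => ⟨h b, fun y _ => h y⟩⟩
  by_cases hy : f.SameCycle b y
  · exact hy.cycleLength_eq ▸ hb
  · exact hP y hy

/-- The shift `Q (k + 1)` accounts for `none` being dropped from its cycle. -/
theorem markedCycleLengths_none_iff [Finite α] {P Q : ℕ → Prop} {f : Perm (Option α)} :
    MarkedCycleLengths P Q none f ↔
      (f none).elim (Q 1 ∧ ∀ y, P (cycleLength (removeNone f) y))
        (fun b => MarkedCycleLengths P (fun k => Q (k + 1)) b (removeNone f)) := by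
  simp only [MarkedCycleLengths, Option.forall, SameCycle.refl, not_true_eq_false, false_imp_iff,
    true_and]
  cases hb : f none with
  | none =>
    have hfix (y : α) : ¬f.SameCycle (some y) none := fun h => by simpa using h.eq_of_right hb
    simp only [Option.elim, cycleLength_eq_one_of_apply_eq hb, sameCycle_comm (x := none), hfix,
      not_false_eq_true, forall_const, cycleLength_some_of_not_sameCycle (hfix _)]
  | some b =>
    have hcycle (y : α) : f.SameCycle none (some y) ↔ SameCycle (removeNone f) b y := by
      rw [← sameCycle_apply_left, hb, sameCycle_removeNone_iff]
    have hlen : f.cycleLength none = cycleLength (removeNone f) b + 1 := by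
      rw [(sameCycle_apply_right.2 (SameCycle.refl f none)).cycleLength_eq, hb,
        cycleLength_some_of_sameCycle ((hcycle b).2 (SameCycle.refl _ b)).symm]
    simp only [Option.elim, hlen, hcycle]
    refine and_congr Iff.rfl (forall_congr' fun y => imp_congr_right fun hy => ?_)
    rw [cycleLength_some_of_not_sameCycle fun h => hy ((hcycle y).1 h.symm)]

theorem markedCycleLengths_permCongr {P Q : ℕ → Prop} (e : α ≃ β) {b : α} {f : Perm α} :
    MarkedCycleLengths P Q (e b) (e.permCongr f) ↔ MarkedCycleLengths P Q b f := by
  simp only [MarkedCycleLengths, cycleLength_permCongr, ← e.forall_congr_right,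
    sameCycle_permCongr]

theorem card_markedCycleLengths_congr (P Q : ℕ → Prop) (e : α ≃ β) (b : α) :
    Nat.card {f : Perm α // MarkedCycleLengths P Q b f} =
      Nat.card {g : Perm β // MarkedCycleLengths P Q (e b) g} :=
  Nat.card_congr <| e.permCongr.subtypeEquiv fun _ => (markedCycleLengths_permCongr e).symm

theorem card_perm_option [Fintype α] [DecidableEq α] (R : Option α → Perm α → Prop) :
    Nat.card {f : Perm (Option α) // R (f none) (removeNone f)} =
      Nat.card {g : Perm α // R none g} + ∑ b, Nat.card {g : Perm α // R (some b) g} := by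
  refine (Nat.card_congr ((decomposeOption.subtypeEquiv fun _ => Iff.rfl).trans
    (subtypeProdEquivSigmaSubtype R))).trans ?_
  rw [Nat.card_sigma, Fintype.sum_option]

theorem card_markedCycleLengths_option [Fintype α] [DecidableEq α] (P Q : ℕ → Prop)
    [Decidable (Q 1)] :
    Nat.card {f : Perm (Option α) // MarkedCycleLengths P Q none f} =
      (if Q 1 then Nat.card {g : Perm α // ∀ y, P (g.cycleLength y)} else 0) +
        ∑ b, Nat.card {g : Perm α // MarkedCycleLengths P (fun k => Q (k + 1)) b g} := by
  rw [Nat.card_congr (Equiv.subtypeEquivRight fun _ => markedCycleLengths_none_iff)]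
  refine (card_perm_option fun a g => a.elim (Q 1 ∧ ∀ y, P (g.cycleLength y))
    fun b => MarkedCycleLengths P (fun k => Q (k + 1)) b g).trans ?_
  split_ifs with hQ <;> simp [hQ]

end Equiv.Perm

open Equiv.Perm

noncomputable def permCount (P : ℕ → Prop) (n : ℕ) : ℕ :=
  Nat.card {f : Perm (Fin n) // ∀ x, P (f.cycleLength x)}

noncomputable def markedPermCount (P Q : ℕ → Prop) (n : ℕ) : ℕ :=
  Nat.card {f : Perm (Fin (n + 1)) // MarkedCycleLengths P Q 0 f}

theorem permCount_zero (P : ℕ → Prop) : permCount P 0 = 1 :=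
  Nat.card_eq_one_iff_unique.2 ⟨inferInstance, ⟨⟨1, finZeroElim⟩⟩⟩

theorem permCount_succ (P : ℕ → Prop) (n : ℕ) : permCount P (n + 1) = markedPermCount P P n :=
  Nat.card_congr (Equiv.subtypeEquivRight fun _ => markedCycleLengths_self_iff.symm)

theorem markedPermCount_eq_card_option (P Q : ℕ → Prop) (n : ℕ) :
    markedPermCount P Q n =
      Nat.card {f : Perm (Option (Fin n)) // MarkedCycleLengths P Q none f} := by
  rw [markedPermCount, card_markedCycleLengths_congr P Q (finSuccEquiv n), finSuccEquiv_zero]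

theorem markedPermCount_zero (P Q : ℕ → Prop) [Decidable (Q 1)] :
    markedPermCount P Q 0 = if Q 1 then 1 else 0 := by
  rw [markedPermCount_eq_card_option, card_markedCycleLengths_option]
  simp only [Finset.univ_eq_empty, Finset.sum_empty, add_zero]
  exact if_congr Iff.rfl (permCount_zero P) rfl

theorem markedPermCount_succ (P Q : ℕ → Prop) [Decidable (Q 1)] (n : ℕ) :
    markedPermCount P Q (n + 1) =
      (if Q 1 then permCount P (n + 1) else 0) +
        (n + 1) * markedPermCount P (fun k => Q (k + 1)) n := by
  rw [markedPermCount_eq_card_option, card_markedCycleLengths_option]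
  congr 1
  have hmarked (b : Fin (n + 1)) :
      Nat.card {g : Perm (Fin (n + 1)) // MarkedCycleLengths P (fun k => Q (k + 1)) b g} =
        markedPermCount P (fun k => Q (k + 1)) n := by
    rw [card_markedCycleLengths_congr _ _ (swap b 0), swap_apply_left, markedPermCount]
  simp [hmarked]

theorem markedPermCount_odd_even (n : ℕ) : markedPermCount Odd Even n = n * permCount Odd n := by
  cases n with
  | zero => simp [markedPermCount_zero]
  | succ n =>
    rw [markedPermCount_succ, if_neg Nat.not_even_one, zero_add, permCount_succ]
    simp only [Nat.even_add_one, Nat.not_even_iff_odd]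

theorem permCount_odd_add_two (n : ℕ) :
    permCount Odd (n + 2) = permCount Odd (n + 1) + (n + 1) * (n * permCount Odd n) := by
  rw [permCount_succ, markedPermCount_succ, if_pos odd_one, ← markedPermCount_odd_even]
  simp only [Nat.odd_add_one, Nat.not_odd_iff_even]

theorem markedPermCount_even_odd (n : ℕ) :
    markedPermCount Even Odd n = (n + 1) * permCount Even n := by
  cases n with
  | zero => simp [markedPermCount_zero, permCount_zero]
  | succ n =>
    rw [markedPermCount_succ, if_pos odd_one, permCount_succ]
    simp only [Nat.odd_add_one, Nat.not_odd_iff_even]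
    ring

theorem permCount_even_add_two (n : ℕ) :
    permCount Even (n + 2) = (n + 1) * ((n + 1) * permCount Even n) := by
  rw [permCount_succ, markedPermCount_succ, if_neg Nat.not_even_one, zero_add,
    ← markedPermCount_even_odd]
  simp only [Nat.even_add_one, Nat.not_even_iff_odd]

theorem permCount_odd_one : permCount Odd 1 = 1 := by
  rw [permCount_succ, markedPermCount_zero, if_pos odd_one]

theorem permCount_odd_two_mul_and_add_one (k : ℕ) :
    permCount Odd (2 * k) = permCount Even (2 * k) ∧
      permCount Odd (2 * k + 1) = (2 * k + 1) * permCount Even (2 * k) := by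
  induction k with
  | zero => simp [permCount_zero, permCount_odd_one]
  | succ k ih =>
    have h2 : 2 * (k + 1) = 2 * k + 2 := by ring
    have heven : permCount Odd (2 * k + 2) = permCount Even (2 * k + 2) := by
      rw [permCount_odd_add_two, permCount_even_add_two, ih.1, ih.2]
      ring
    refine ⟨h2 ▸ heven, ?_⟩
    rw [h2, permCount_odd_add_two, heven, ih.2, permCount_even_add_two]
    ring

theorem card_cycleType_odd_eq_permCount (n : ℕ) :
    Nat.card {σ : Perm (Fin n) // ∀ l ∈ σ.cycleType, Odd l} = permCount Odd n :=
  Nat.card_congr <| Equiv.subtypeEquivRight fun _ => by simp [forall_cycleLength_iff]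

theorem card_cycleType_even_eq_permCount (n : ℕ) :
    Nat.card {σ : Perm (Fin n) // (∀ x, σ x ≠ x) ∧ ∀ l ∈ σ.cycleType, Even l} =
      permCount Even n :=
  Nat.card_congr <| Equiv.subtypeEquivRight fun _ => by simp [forall_cycleLength_iff]

theorem card_oddCycles_odd_eq_mul_general (n : ℕ) (hno : Odd n) :
    Nat.card {σ : Equiv.Perm (Fin n) // ∀ l ∈ σ.cycleType, Odd l} =
      n * Nat.card {σ : Equiv.Perm (Fin (n - 1)) //
        (∀ x, σ x ≠ x) ∧ ∀ l ∈ σ.cycleType, Even l} := by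
  obtain ⟨k, rfl⟩ := hno
  rw [card_cycleType_odd_eq_permCount, card_cycleType_even_eq_permCount, Nat.add_sub_cancel]
  exact (permCount_odd_two_mul_and_add_one k).2

theorem card_oddCycles_odd_eq_mul (n : ℕ) (hn : 0 < n) (hno : Odd n) :
    Nat.card {σ : Equiv.Perm (Fin n) // ∀ l ∈ σ.cycleType, Odd l} =
      n * Nat.card {σ : Equiv.Perm (Fin (n - 1)) //
        (∀ x, σ x ≠ x) ∧ ∀ l ∈ σ.cycleType, Even l} :=
  card_oddCycles_odd_eq_mul_general n hno
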